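/- arXiv:2509.01346 — 6 statements merged into one kernel-verified Lean document; each statement's English description precedes it below -/
import Mathlib

section
/- Fix p ∈ (0,1) (playing the role of F(a)) and define for λ > 0: Z(λ) = 1 − (1 − e^{−1/λ})p, G(λ) = e^{−1/λ} p / Z(λ), and D(λ) = −log Z(λ) − G(λ)/λ. Then λ ↦ D(λ) is continuous and strictly decreasing on (0,∞), provided 0 < p < 1. -/
open Set

private lemma zpos {p t : ℝ} (hp1 : p < 1) (ht : 0 < t) (hpp : 0 < p) :
    0 < 1 - (1 - t) * p := by nlinarith

private lemma f_deriv {p : ℝ} (hp : 0 < p) (hp1 : p < 1) {t : ℝ} (ht : t ∈ Ioo (0:ℝ) 1) :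
    HasDerivAt (fun t => -Real.log (1 - (1 - t) * p) + p * t * Real.log t / (1 - (1 - t) * p))
      (p * Real.log t * (1 - p) / (1 - (1 - t) * p) ^ 2) t := by
  obtain ⟨ht0, ht1⟩ := ht
  have hZ : (0:ℝ) < 1 - (1 - t) * p := zpos hp1 ht0 hp
  have hZ' : HasDerivAt (fun t : ℝ => 1 - (1 - t) * p) p t := by
    have : HasDerivAt (fun t : ℝ => 1 - (1 - t) * p) (0 - (0 - 1) * p) t := by
      exact ((hasDerivAt_const t (1:ℝ)).sub (((hasDerivAt_const t (1:ℝ)).sub (hasDerivAt_id t)).mul_const p))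
    simpa using this
  have hlog : HasDerivAt (fun t : ℝ => Real.log (1 - (1 - t) * p)) (p / (1 - (1 - t) * p)) t := by
    simpa [div_eq_mul_inv, mul_comm, Function.comp_def] using (Real.hasDerivAt_log hZ.ne').comp t hZ'
  have hN : HasDerivAt (fun t : ℝ => p * t * Real.log t) (p * Real.log t + p) t := by
    have h1 : HasDerivAt (fun t : ℝ => p * t) p t := by
      simpa using (hasDerivAt_id t).const_mul p
    have := h1.mul (Real.hasDerivAt_log ht0.ne')
    rw [show p * Real.log t + p = p * Real.log t + p * t * t⁻¹ by rw [mul_inv_cancel_right₀ ht0.ne']]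
    exact this
  have hq : HasDerivAt (fun t => p * t * Real.log t / (1 - (1 - t) * p))
      (((p * Real.log t + p) * (1 - (1 - t) * p) - p * t * Real.log t * p) / (1 - (1 - t) * p) ^ 2) t :=
    hN.div hZ' hZ.ne'
  have := hlog.neg.add hq
  have hZne : (1 - (1 - t) * p) ≠ 0 := hZ.ne'
  rw [show p * Real.log t * (1 - p) / (1 - (1 - t) * p) ^ 2 = -(p / (1 - (1 - t) * p)) + ((p * Real.log t + p) * (1 - (1 - t) * p) - p * t * Real.log t * p) / (1 - (1 - t) * p) ^ 2 by
    field_simp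
    ring]
  exact this

theorem stmt_5 (p : ℝ) (hp : 0 < p) (hp1 : p < 1)
    (Z G D : ℝ → ℝ)
    (hZ : ∀ lam, Z lam = 1 - (1 - Real.exp (-1 / lam)) * p)
    (hG : ∀ lam, G lam = Real.exp (-1 / lam) * p / Z lam)
    (hD : ∀ lam, D lam = -Real.log (Z lam) - G lam / lam) :
    ContinuousOn D (Ioi (0:ℝ)) ∧ StrictAntiOn D (Ioi (0:ℝ)) := by
  set f : ℝ → ℝ := fun t => -Real.log (1 - (1 - t) * p) + p * t * Real.log t / (1 - (1 - t) * p)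
    with hf
  set g : ℝ → ℝ := fun lam => Real.exp (-1 / lam) with hg
  have hmaps : MapsTo g (Ioi (0:ℝ)) (Ioo (0:ℝ) 1) := by
    intro x hx
    have hx0 : (0:ℝ) < x := hx
    constructor
    · exact Real.exp_pos _
    · have : (-1 : ℝ) / x < 0 := div_neg_of_neg_of_pos (by norm_num) hx0
      calc Real.exp (-1 / x) < Real.exp 0 := Real.exp_lt_exp.mpr this
        _ = 1 := Real.exp_zero
  have hDf : ∀ lam ∈ Ioi (0:ℝ), D lam = f (g lam) := by
    intro lam hlam
    have hlam0 : (0:ℝ) < lam := hlam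
    have hlogg : Real.log (g lam) = -1 / lam := Real.log_exp _
    rw [hD, hG, hZ, hf]
    simp only [hg, hlogg, Real.log_exp]
    ring
  -- continuity of f on Ioo 0 1
  have hZne : ∀ t ∈ Ioo (0:ℝ) 1, 1 - (1 - t) * p ≠ 0 := fun t ht => (zpos hp1 ht.1 hp).ne'
  have hfc : ContinuousOn f (Ioo (0:ℝ) 1) := by
    apply ContinuousOn.add
    · exact ((continuousOn_const.sub ((continuousOn_const.sub continuousOn_id).mul
        continuousOn_const)).log hZne).neg
    · exact ContinuousOn.div
        ((continuousOn_const.mul continuousOn_id).mul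
          (Real.continuousOn_log.mono (fun t ht => ht.1.ne')))
        (continuousOn_const.sub ((continuousOn_const.sub continuousOn_id).mul continuousOn_const))
        hZne
  have hgc : ContinuousOn g (Ioi (0:ℝ)) := by
    apply Real.continuous_exp.comp_continuousOn
    exact continuousOn_const.div continuousOn_id (fun x hx => ne_of_gt hx)
  have hfanti : StrictAntiOn f (Ioo (0:ℝ) 1) := by
    apply strictAntiOn_of_deriv_neg (convex_Ioo _ _) hfc
    intro t ht
    rw [interior_Ioo] at ht
    rw [(f_deriv hp hp1 ht).deriv]
    have hlt : Real.log t < 0 := Real.log_neg ht.1 ht.2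
    have hZ2 : (0:ℝ) < (1 - (1 - t) * p) ^ 2 := pow_pos (zpos hp1 ht.1 hp) 2
    have : p * Real.log t * (1 - p) < 0 := mul_neg_of_neg_of_pos (mul_neg_of_pos_of_neg hp hlt) (by linarith)
    exact div_neg_of_neg_of_pos this hZ2
  constructor
  · apply ContinuousOn.congr _ hDf
    exact hfc.comp hgc hmaps
  · intro x hx y hy hxy
    rw [hDf x hx, hDf y hy]
    refine hfanti (hmaps hx) (hmaps hy) ?_
    have : 1 / y < 1 / x := one_div_lt_one_div_of_lt hx hxy
    apply Real.exp_lt_exp.mpr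
    have hx0 : (0:ℝ) < x := hx
    have hy0 : (0:ℝ) < y := hy
    rw [neg_div, neg_div, neg_lt_neg_iff]
    exact this
end

section
/- Fix p ∈ (0,1) and let D(λ) = −log(1 − (1 − e^{−1/λ})p) − e^{−1/λ}p / (λ(1 − (1 − e^{−1/λ})p)) for λ > 0. Then D(λ) → 0 as λ → ∞, and for every ε > 0 with ε < −log(1−p) there exists a unique λ > 0 with D(λ) = ε. -/
open Set Filter

private lemma aux_deriv (p : ℝ) (hp : 0 < p) (hp1 : p < 1) {x : ℝ} (hx : 0 < x) :
    HasDerivAt (fun l => -Real.log (1 - (1 - Real.exp (-1 / l)) * p)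
        - Real.exp (-1 / l) * p / (l * (1 - (1 - Real.exp (-1 / l)) * p)))
      (-(p * (1 - p) * Real.exp (-1 / x)) /
        (x ^ 3 * (1 - (1 - Real.exp (-1 / x)) * p) ^ 2)) x := by
  have hx0 : x ≠ 0 := hx.ne'
  set t := Real.exp (-1 / x) with ht
  have htpos : 0 < t := Real.exp_pos _
  have htlt : t < 1 := by
    rw [ht, Real.exp_lt_one_iff]
    exact div_neg_of_neg_of_pos (by norm_num) hx
  have hupos : 0 < 1 - (1 - t) * p := by nlinarith
  have hu0 : 1 - (1 - t) * p ≠ 0 := hupos.ne'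
  have h1 : HasDerivAt (fun l : ℝ => -1 / l) (1 / x ^ 2) x := by
    have := (hasDerivAt_inv hx0).neg
    simp only [neg_neg] at this
    simpa [neg_div, one_div, Pi.neg_def] using this
  have ht' : HasDerivAt (fun l : ℝ => Real.exp (-1 / l)) (t * (1 / x ^ 2)) x := h1.exp
  have hu' : HasDerivAt (fun l : ℝ => 1 - (1 - Real.exp (-1 / l)) * p)
      (-(-(t * (1 / x ^ 2)) * p)) x := ((ht'.const_sub 1).mul_const p).const_sub 1
  have hlog : HasDerivAt (fun l : ℝ => -Real.log (1 - (1 - Real.exp (-1 / l)) * p))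
      (-((-(-(t * (1 / x ^ 2)) * p)) / (1 - (1 - t) * p))) x := (hu'.log hu0).neg
  have hnum : HasDerivAt (fun l : ℝ => Real.exp (-1 / l) * p) (t * (1 / x ^ 2) * p) x :=
    ht'.mul_const p
  have hden : HasDerivAt (fun l : ℝ => l * (1 - (1 - Real.exp (-1 / l)) * p))
      (1 * (1 - (1 - t) * p) + x * (-(-(t * (1 / x ^ 2)) * p))) x := (hasDerivAt_id x).mul hu'
  have hden0 : x * (1 - (1 - t) * p) ≠ 0 := by positivity
  have hfrac := hnum.div hden hden0
  have htotal := hlog.sub hfrac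
  convert htotal using 1
  rfl
  rfl
  rfl
  rw [← ht]
  field_simp
  ring

set_option maxHeartbeats 1000000 in
theorem stmt_6 (p : ℝ) (hp : 0 < p) (hp1 : p < 1)
    (D : ℝ → ℝ)
    (hD : ∀ lam, D lam = -Real.log (1 - (1 - Real.exp (-1 / lam)) * p)
        - Real.exp (-1 / lam) * p / (lam * (1 - (1 - Real.exp (-1 / lam)) * p))) :
    Tendsto D atTop (nhds 0)
    ∧ ∀ ε : ℝ, 0 < ε → ε < -Real.log (1 - p) → ∃! lam : ℝ, 0 < lam ∧ D lam = ε := by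
  have hDfun : D = fun l => -Real.log (1 - (1 - Real.exp (-1 / l)) * p)
      - Real.exp (-1 / l) * p / (l * (1 - (1 - Real.exp (-1 / l)) * p)) := funext hD
  subst hDfun
  set D : ℝ → ℝ := fun l => -Real.log (1 - (1 - Real.exp (-1 / l)) * p)
      - Real.exp (-1 / l) * p / (l * (1 - (1 - Real.exp (-1 / l)) * p)) with hDdef
  -- continuity on (0, ∞)
  have hcont : ContinuousOn D (Ioi 0) := fun x hx =>
    ((aux_deriv p hp hp1 hx).differentiableAt.continuousAt).continuousWithinAt
  -- strict antitonicity
  have hanti : StrictAntiOn D (Ioi 0) := by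
    apply strictAntiOn_of_deriv_neg (convex_Ioi 0) hcont
    intro x hx
    rw [interior_Ioi] at hx
    have hx' : (0:ℝ) < x := hx
    rw [(aux_deriv p hp hp1 hx').deriv]
    have htpos : 0 < Real.exp (-1 / x) := Real.exp_pos _
    have htlt : Real.exp (-1 / x) < 1 := by
      rw [Real.exp_lt_one_iff]
      exact div_neg_of_neg_of_pos (by norm_num) hx'
    have hupos : 0 < 1 - (1 - Real.exp (-1 / x)) * p := by nlinarith
    apply div_neg_of_neg_of_pos
    · have : 0 < p * (1 - p) * Real.exp (-1 / x) :=
        mul_pos (mul_pos hp (by linarith)) htpos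
      linarith
    · exact mul_pos (pow_pos hx' 3) (pow_pos hupos 2)
  -- limit at infinity
  have h_t1 : Tendsto (fun l : ℝ => Real.exp (-1 / l)) atTop (nhds 1) := by
    have h0 : Tendsto (fun l : ℝ => -1 / l) atTop (nhds 0) := by
      have h := (tendsto_inv_atTop_zero (𝕜 := ℝ)).neg
      simpa [neg_div, one_div] using h
    simpa [Function.comp_def] using (Real.continuous_exp.tendsto 0).comp h0
  have h_u1 : Tendsto (fun l : ℝ => 1 - (1 - Real.exp (-1 / l)) * p) atTop (nhds 1) := by
    have := ((h_t1.const_sub 1).mul_const p).const_sub 1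
    simpa using this
  have limA : Tendsto D atTop (nhds 0) := by
    have hlog : Tendsto (fun l : ℝ => -Real.log (1 - (1 - Real.exp (-1 / l)) * p))
        atTop (nhds 0) := by
      have := ((Real.continuousAt_log one_ne_zero).tendsto.comp h_u1).neg
      simpa using this
    have hden : Tendsto (fun l : ℝ => l * (1 - (1 - Real.exp (-1 / l)) * p)) atTop atTop :=
      tendsto_id.atTop_mul_pos one_pos h_u1
    have hfrac : Tendsto (fun l : ℝ => Real.exp (-1 / l) * p /
        (l * (1 - (1 - Real.exp (-1 / l)) * p))) atTop (nhds 0) :=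
      (h_t1.mul_const p).div_atTop hden
    simpa using hlog.sub hfrac
  refine ⟨limA, ?_⟩
  -- limit at 0+
  have h_t0 : Tendsto (fun l : ℝ => Real.exp (-1 / l)) (nhdsWithin 0 (Ioi 0)) (nhds 0) := by
    have h0 : Tendsto (fun l : ℝ => -1 / l) (nhdsWithin 0 (Ioi 0)) atBot := by
      apply (tendsto_neg_atTop_atBot.comp (tendsto_inv_nhdsGT_zero (𝕜 := ℝ))).congr
      intro l
      simp [neg_div, one_div]
    exact Real.tendsto_exp_atBot.comp h0
  have h_u0 : Tendsto (fun l : ℝ => 1 - (1 - Real.exp (-1 / l)) * p)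
      (nhdsWithin 0 (Ioi 0)) (nhds (1 - p)) := by
    have := ((h_t0.const_sub 1).mul_const p).const_sub 1
    simpa using this
  have h1p : (0:ℝ) < 1 - p := by linarith
  have limB : Tendsto D (nhdsWithin 0 (Ioi 0)) (nhds (-Real.log (1 - p))) := by
    have hlog : Tendsto (fun l : ℝ => -Real.log (1 - (1 - Real.exp (-1 / l)) * p))
        (nhdsWithin 0 (Ioi 0)) (nhds (-Real.log (1 - p))) :=
      ((Real.continuousAt_log h1p.ne').tendsto.comp h_u0).neg
    have hkey : Tendsto (fun l : ℝ => Real.exp (-1 / l) / l) (nhdsWithin 0 (Ioi 0)) (nhds 0) := by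
      have h := (Real.tendsto_pow_mul_exp_neg_atTop_nhds_zero 1).comp
        (tendsto_inv_nhdsGT_zero (𝕜 := ℝ))
      apply h.congr
      intro l
      simp only [Function.comp_apply, pow_one]
      rw [mul_comm, neg_div, one_div, div_eq_mul_inv]
    have hfrac : Tendsto (fun l : ℝ => Real.exp (-1 / l) * p /
        (l * (1 - (1 - Real.exp (-1 / l)) * p))) (nhdsWithin 0 (Ioi 0)) (nhds 0) := by
      have h2 : Tendsto (fun l : ℝ => p / (1 - (1 - Real.exp (-1 / l)) * p))
          (nhdsWithin 0 (Ioi 0)) (nhds (p / (1 - p))) :=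
        Tendsto.div (tendsto_const_nhds (x := p)) h_u0 h1p.ne'
      have := hkey.mul h2
      simp only [zero_mul] at this
      apply this.congr
      intro l
      rw [← mul_div_mul_comm]
    simpa using hlog.sub hfrac
  intro ε hε hε'
  -- find a with D a > ε
  obtain ⟨a, haD, ha⟩ : ∃ a, ε < D a ∧ 0 < a := by
    have h1 : ∀ᶠ l in nhdsWithin 0 (Ioi 0), ε < D l :=
      limB.eventually (eventually_gt_nhds hε')
    have h2 : ∀ᶠ l in nhdsWithin (0:ℝ) (Ioi 0), 0 < l := eventually_mem_nhdsWithin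
    exact (h1.and h2).exists
  -- find b ≥ a with D b < ε
  obtain ⟨b, hab, hbD⟩ : ∃ b, a ≤ b ∧ D b < ε := by
    have h1 : ∀ᶠ l in atTop, D l < ε := limA.eventually (eventually_lt_nhds hε)
    exact ((eventually_ge_atTop a).and h1).exists
  have hb : 0 < b := lt_of_lt_of_le ha hab
  have hsub : Icc a b ⊆ Ioi 0 := fun y hy => lt_of_lt_of_le ha hy.1
  have hIVT := intermediate_value_Icc' hab (hcont.mono hsub)
  obtain ⟨lam, hlam, hlameq⟩ := hIVT ⟨hbD.le, haD.le⟩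
  refine ⟨lam, ⟨hsub hlam, hlameq⟩, ?_⟩
  rintro y ⟨hy0, hyD⟩
  exact hanti.injOn hy0 (hsub hlam) (hyD.trans hlameq.symm)
end

section
/- Let P have CDF F, fix λ > 0, set C = 1 − e^{−1/λ}, and define φ_λ(a) = F(a)(1 − F(a)) C / (1 − C F(a)). If F is continuous and strictly increasing from 0 to 1 on ℝ (i.e., F is a homeomorphism onto (0,1) wherever defined with limits 0 and −∞ and 1 at +∞), then φ_λ attains its supremum over ℝ at the unique point a* = F^{−1}(1/(1 + e^{−1/(2λ)})). -/
/-!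
Since `0 < F < 1` and `F` attains every value of `(0, 1)` exactly once, it suffices to maximise
`g(u) = u (1 - u) C / (1 - C u)` over `u ∈ (0, 1)`. With `q = exp (-1 / (2λ))` we have
`C = 1 - q²`, and `(1 - q) / (1 + q) - g(u) = (1 - q) ((1 + q) u - 1)² / ((1 + q) (1 - C u))`,
so `g` is maximised exactly at `u = 1 / (1 + q)`.
-/

open Set Filter Topology

section StrictMono

variable {α β : Type*} [LinearOrder α] [Preorder β] [TopologicalSpace β]
  [OrderClosedTopology β] {f : α → β}

theorem StrictMono.lt_of_tendsto_atBot [NoMinOrder α] {l : β} (hf : StrictMono f)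
    (hl : Tendsto f atBot (𝓝 l)) (a : α) : l < f a := by
  obtain ⟨b, hb⟩ := exists_lt a
  exact (hf.monotone.le_of_tendsto hl b).trans_lt (hf hb)

theorem StrictMono.lt_of_tendsto_atTop [NoMaxOrder α] {l : β} (hf : StrictMono f)
    (hl : Tendsto f atTop (𝓝 l)) (a : α) : f a < l := by
  obtain ⟨b, hb⟩ := exists_gt a
  exact (hf hb).trans_le (hf.monotone.ge_of_tendsto hl b)

end StrictMono

theorem Continuous.Ioo_subset_range {α δ : Type*} [LinearOrder α] [TopologicalSpace α]
    [PreconnectedSpace α] [Nonempty α] [LinearOrder δ] [TopologicalSpace δ] [OrderTopology δ]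
    {f : α → δ} (hf : Continuous f) {l u : δ}
    (hbot : Tendsto f atBot (𝓝 l)) (htop : Tendsto f atTop (𝓝 u)) : Ioo l u ⊆ range f :=
  fun _ hc => mem_range_of_exists_le_of_exists_ge hf
    (hbot.eventually (ge_mem_nhds hc.1)).exists (htop.eventually (le_mem_nhds hc.2)).exists

theorem Real.exp_neg_one_div_two_mul_sq (x : ℝ) :
    Real.exp (-1 / (2 * x)) ^ 2 = Real.exp (-1 / x) := by
  rw [← Real.exp_nat_mul]
  congr 1
  rcases eq_or_ne x 0 with rfl | hx
  · simp
  · field_simp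
    ring

noncomputable def dualObjective (C u : ℝ) : ℝ := u * (1 - u) * C / (1 - C * u)

theorem dualObjective_one_div_one_add {q : ℝ} (hq : 0 < q) :
    dualObjective (1 - q ^ 2) (1 / (1 + q)) = (1 - q) / (1 + q) := by
  have hden : (1 - q ^ 2) * (1 / (1 + q)) = 1 - q := by
    field_simp
    ring
  rw [dualObjective, hden, sub_sub_cancel]
  field_simp
  ring

theorem isMaxOn_dualObjective {q : ℝ} (hq0 : 0 < q) (hq1 : q ≤ 1) :
    IsMaxOn (dualObjective (1 - q ^ 2)) (Ioo 0 1) (1 / (1 + q)) := by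
  refine isMaxOn_iff.2 fun u ⟨hu0, hu1⟩ => ?_
  have hden : 0 < 1 - (1 - q ^ 2) * u := by nlinarith
  rw [dualObjective_one_div_one_add hq0, dualObjective, div_le_div_iff₀ hden (by linarith)]
  nlinarith [mul_nonneg (sub_nonneg.2 hq1) (sq_nonneg ((1 + q) * u - 1))]

theorem stmt_9 (F : ℝ → ℝ) (hcont : Continuous F) (hmono : StrictMono F)
    (h0 : Tendsto F atBot (nhds 0)) (h1 : Tendsto F atTop (nhds 1))
    (lam : ℝ) (hlam : 0 < lam)
    (C : ℝ) (hC : C = 1 - Real.exp (-1 / lam))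
    (φ : ℝ → ℝ) (hφ : ∀ a, φ a = F a * (1 - F a) * C / (1 - C * F a)) :
    ∃! astar : ℝ, F astar = 1 / (1 + Real.exp (-1 / (2 * lam))) ∧ ∀ a : ℝ, φ a ≤ φ astar := by
  set q := Real.exp (-1 / (2 * lam))
  have hq0 : 0 < q := Real.exp_pos _
  have hq1 : q < 1 := Real.exp_lt_one_iff.2 (div_neg_of_neg_of_pos (by norm_num) (by positivity))
  have hCq : C = 1 - q ^ 2 := by rw [hC, Real.exp_neg_one_div_two_mul_sq]
  have hopt : 1 / (1 + q) ∈ Ioo (0 : ℝ) 1 :=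
    ⟨by positivity, (div_lt_one (by positivity)).2 (by linarith)⟩
  obtain ⟨astar, hastar⟩ := hcont.Ioo_subset_range h0 h1 hopt
  refine ⟨astar, ⟨hastar, fun a => ?_⟩,
    fun b hb => hmono.injective (hb.1.trans hastar.symm)⟩
  rw [hφ, hφ, hastar, hCq]
  exact isMaxOn_iff.1 (isMaxOn_dualObjective hq0 hq1.le) (F a)
    ⟨hmono.lt_of_tendsto_atBot h0 a, hmono.lt_of_tendsto_atTop h1 a⟩
end

section
/- First-order stochastic dominance of the tilted optimizer: with P, F, λ > 0, a* ∈ ℝ, and Q* the exponentially tilted measure with density exp(−1_{x≤a*}/λ)/Z relative to P (Z = 1 − (1−e^{−1/λ})F(a*)), the CDF G* of Q* satisfies G*(x) ≤ F(x) for all x ∈ ℝ. -/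
open MeasureTheory Set

theorem stmt_13 (P : Measure ℝ) [IsProbabilityMeasure P] (astar lam : ℝ) (hlam : 0 < lam)
    (Z : ℝ) (hZ : Z = 1 - (1 - Real.exp (-1 / lam)) * (P (Iic astar)).toReal)
    (Q : Measure ℝ)
    (hQ : Q = P.withDensity (fun x => ENNReal.ofReal
        (Real.exp (-(if x ≤ astar then (1:ℝ) else 0) / lam) / Z))) :
    ∀ x : ℝ, (Q (Iic x)).toReal ≤ (P (Iic x)).toReal := by
  intro x
  set e := Real.exp (-1 / lam) with he
  have he0 : 0 < e := Real.exp_pos _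
  have he1 : e < 1 :=
    Real.exp_lt_one_iff.mpr (div_neg_of_neg_of_pos (by norm_num) hlam)
  set F := (P (Iic astar)).toReal with hF
  have hF0 : 0 ≤ F := ENNReal.toReal_nonneg
  have hF1 : F ≤ 1 := by
    rw [hF]
    exact ENNReal.toReal_le_of_le_ofReal zero_le_one (by simpa using prob_le_one)
  have hZpos : 0 < Z := by nlinarith
  set p := (P (Iic x)).toReal with hp
  have hp1 : p ≤ 1 := by
    rw [hp]
    exact ENNReal.toReal_le_of_le_ofReal zero_le_one (by simpa using prob_le_one)
  have hp0 : 0 ≤ p := ENNReal.toReal_nonneg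
  have hfin : ∀ s : Set ℝ, P s ≠ ⊤ := fun s => measure_ne_top P s
  have hd1 : ∀ y : ℝ, y ≤ astar →
      ENNReal.ofReal (Real.exp (-(if y ≤ astar then (1:ℝ) else 0) / lam) / Z)
        = ENNReal.ofReal (e / Z) := by
    intro y hy; rw [if_pos hy, he]
  have hd2 : ∀ y : ℝ, ¬ y ≤ astar →
      ENNReal.ofReal (Real.exp (-(if y ≤ astar then (1:ℝ) else 0) / lam) / Z)
        = ENNReal.ofReal (1 / Z) := by
    intro y hy; rw [if_neg hy]; norm_num
  rcases le_or_gt x astar with hx | hx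
  · have hQx : Q (Iic x) = ENNReal.ofReal (e / Z) * P (Iic x) := by
      rw [hQ, withDensity_apply _ measurableSet_Iic,
        setLIntegral_congr_fun_ae (g := fun _ => ENNReal.ofReal (e / Z)) measurableSet_Iic
          (ae_of_all _ (fun y (hy : y ≤ x) => hd1 y (hy.trans hx))),
        setLIntegral_const]
    have heZ : e / Z ≤ 1 := by
      rw [div_le_one hZpos]
      nlinarith [mul_nonneg (mul_nonneg (sub_nonneg.mpr he1.le) hF0) (sub_nonneg.mpr hp1)]
    rw [hQx, ENNReal.toReal_mul, ENNReal.toReal_ofReal (by positivity), ← hp]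
    nlinarith [mul_nonneg (mul_nonneg (sub_nonneg.mpr he1.le) hF0) (sub_nonneg.mpr hp1)]
  · have hsub : Iic astar ⊆ Iic x := Iic_subset_Iic.mpr hx.le
    have hun : Iic astar ∪ Ioc astar x = Iic x := Iic_union_Ioc_eq_Iic hx.le
    have hdisj : Disjoint (Iic astar) (Ioc astar x) := by
      apply Set.disjoint_left.mpr
      rintro y (hy : y ≤ astar) ⟨h1, _⟩
      exact absurd hy (not_le.mpr h1)
    have hmeas : P (Iic astar) + P (Ioc astar x) = P (Iic x) := by
      rw [← hun, measure_union hdisj measurableSet_Ioc]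
    have hIoc : (P (Ioc astar x)).toReal = p - F := by
      have := congrArg ENNReal.toReal hmeas
      rw [ENNReal.toReal_add (hfin _) (hfin _)] at this
      rw [← hF, ← hp] at this
      linarith
    have hQx : Q (Iic x) = ENNReal.ofReal (e / Z) * P (Iic astar)
        + ENNReal.ofReal (1 / Z) * P (Ioc astar x) := by
      rw [hQ, withDensity_apply _ measurableSet_Iic, ← hun,
        lintegral_union measurableSet_Ioc hdisj]
      congr 1
      · rw [setLIntegral_congr_fun_ae (g := fun _ => ENNReal.ofReal (e / Z)) measurableSet_Iic
          (ae_of_all _ (fun y (hy : y ≤ astar) => hd1 y hy)),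
          setLIntegral_const]
      · rw [setLIntegral_congr_fun_ae (g := fun _ => ENNReal.ofReal (1 / Z)) measurableSet_Ioc
          (ae_of_all _ (fun y hy => hd2 y (not_le.mpr hy.1))),
          setLIntegral_const]
    have hFp : F ≤ p := by
      rw [hF, hp]
      exact ENNReal.toReal_mono (hfin _) (measure_mono hsub)
    rw [hQx, ENNReal.toReal_add (by finiteness) (by finiteness),
      ENNReal.toReal_mul, ENNReal.toReal_mul,
      ENNReal.toReal_ofReal (by positivity), ENNReal.toReal_ofReal (by positivity),
      ← hF, hIoc]
    rw [div_mul_eq_mul_div, div_mul_eq_mul_div, ← add_div, div_le_iff₀ hZpos]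
    nlinarith [mul_nonneg (mul_nonneg (sub_nonneg.mpr he1.le) hF0) (sub_nonneg.mpr hp1)]
end

section
/- Let C ∈ (0,1) and h(x) = C x (1−x)/(1 − C x). Then the maximum value of h on [0,1] equals h(x*) = (1 − √(1−C))² / C, where x* = 1/(1 + √(1−C)). Equivalently, with C = 1 − e^{−1/λ}, max_x h(x) = (1 − e^{−1/(2λ)})² / (1 − e^{−1/λ}) = (1 − e^{−1/(2λ)})/(1 + e^{−1/(2λ)}). -/
/-!
Write `C = 1 - s²` with `s = √(1 - C) ∈ (0, 1)`. Clearing the (positive) denominators,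
`(1 - s) / (1 + s) - h x` is a positive multiple of `(1 - s) * ((1 + s) * x - 1) ^ 2`, so `h`
is bounded by `(1 - s) / (1 + s)` on `[0, 1]`, with equality exactly at `x = 1 / (1 + s)`.
For `C = 1 - e^{-1/λ}` one has `s = e^{-1/(2λ)}`.
-/

open Set

noncomputable def scalarDual (C x : ℝ) : ℝ := C * x * (1 - x) / (1 - C * x)

lemma one_sub_mul_pos_of_mem_Icc {c x : ℝ} (hc : c < 1) (hx : x ∈ Icc (0 : ℝ) 1) :
    0 < 1 - c * x := by
  obtain ⟨hx0, hx1⟩ := hx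
  rcases hx1.lt_or_eq with hx1 | rfl
  · nlinarith [mul_nonneg (sub_pos.2 hc).le hx0]
  · linarith

lemma scalarDual_le {s x : ℝ} (hs0 : 0 < s) (hs1 : s ≤ 1) (hx : x ∈ Icc (0 : ℝ) 1) :
    scalarDual (1 - s ^ 2) x ≤ (1 - s) / (1 + s) := by
  have hden : 0 < 1 - (1 - s ^ 2) * x := one_sub_mul_pos_of_mem_Icc (by nlinarith) hx
  have key : (1 - s) * (1 - (1 - s ^ 2) * x) - (1 - s ^ 2) * x * (1 - x) * (1 + s)
      = (1 - s) * ((1 + s) * x - 1) ^ 2 := by ring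
  rw [scalarDual, div_le_div_iff₀ hden (by linarith)]
  nlinarith [mul_nonneg (sub_nonneg.2 hs1) (sq_nonneg ((1 + s) * x - 1))]

lemma scalarDual_one_div_one_add {s : ℝ} (hs : 0 < s) :
    scalarDual (1 - s ^ 2) (1 / (1 + s)) = (1 - s) / (1 + s) := by
  have h1 : 1 + s ≠ 0 := by positivity
  have hden : 1 - (1 - s ^ 2) * (1 / (1 + s)) = s := by field_simp; ring
  rw [scalarDual, hden, div_eq_div_iff hs.ne' h1]
  field_simp
  ring

lemma one_sub_div_one_add_eq_sq_div (s : ℝ) : (1 - s) / (1 + s) = (1 - s) ^ 2 / (1 - s ^ 2) := by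
  rcases eq_or_ne (1 - s) 0 with hs | hs
  · simp [hs]
  · rw [show 1 - s ^ 2 = (1 - s) * (1 + s) by ring, sq, mul_div_mul_left _ _ hs]

lemma exp_neg_one_div_eq_sq (lam : ℝ) :
    Real.exp (-1 / lam) = Real.exp (-1 / (2 * lam)) ^ 2 := by
  rw [sq, ← Real.exp_add]
  ring_nf

theorem stmt_15 (C : ℝ) (hC : C ∈ Ioo (0:ℝ) 1)
    (h : ℝ → ℝ) (hh : ∀ x, h x = C * x * (1 - x) / (1 - C * x))
    (xstar : ℝ) (hx : xstar = 1 / (1 + Real.sqrt (1 - C))) :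
    (∀ x ∈ Icc (0:ℝ) 1, h x ≤ h xstar)
    ∧ h xstar = (1 - Real.sqrt (1 - C))^2 / C
    ∧ (∀ lam : ℝ, 0 < lam → C = 1 - Real.exp (-1 / lam) →
        h xstar = (1 - Real.exp (-1 / (2 * lam)))^2 / (1 - Real.exp (-1 / lam))
        ∧ h xstar = (1 - Real.exp (-1 / (2 * lam))) / (1 + Real.exp (-1 / (2 * lam)))) := by
  obtain ⟨s, hs0, hs1, rfl⟩ : ∃ s, 0 < s ∧ s < 1 ∧ C = 1 - s ^ 2 :=
    ⟨√(1 - C), Real.sqrt_pos.2 (by linarith [hC.2]),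
      (Real.sqrt_lt' one_pos).2 (by linarith [hC.1]),
      by rw [Real.sq_sqrt (by linarith [hC.2])]; ring⟩
  have hsqrt : √(1 - (1 - s ^ 2)) = s := by rw [sub_sub_cancel, Real.sqrt_sq hs0.le]
  obtain rfl : h = scalarDual (1 - s ^ 2) := funext hh
  obtain rfl : xstar = 1 / (1 + s) := hsqrt ▸ hx
  have hmax := scalarDual_one_div_one_add hs0
  refine ⟨fun x hx => hmax ▸ scalarDual_le hs0 hs1.le hx, ?_, fun lam _ hlam => ?_⟩
  · rw [hmax, hsqrt, one_sub_div_one_add_eq_sq_div]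
  · have hse : s = Real.exp (-1 / (2 * lam)) := by
      rw [← pow_left_inj₀ hs0.le (Real.exp_pos _).le two_ne_zero, ← exp_neg_one_div_eq_sq]
      linarith
    rw [hmax, ← hlam, ← hse]
    exact ⟨one_sub_div_one_add_eq_sq_div s, rfl⟩
end

section
/- For λ > 0, the maximum over x ∈ [0,1] of h_λ(x) = (1 − e^{−1/λ})x(1−x)/(1 − (1 − e^{−1/λ})x) equals tanh(1/(4λ)), and in particular this maximum is strictly less than 1 and tends to 1 as λ → 0⁺ and to 0 as λ → ∞. -/
open Set Filter

private lemma tanh_eq' (u : ℝ) :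
    Real.tanh u = (1 - Real.exp (-(2*u))) / (1 + Real.exp (-(2*u))) := by
  rw [Real.tanh_eq_sinh_div_cosh, Real.sinh_eq, Real.cosh_eq]
  have e1 : Real.exp (-(2*u)) = Real.exp (-u) * Real.exp (-u) := by
    rw [← Real.exp_add]; ring_nf
  have e2 : Real.exp u * Real.exp (-u) = 1 := by
    rw [← Real.exp_add]; simp
  have h1 : (0:ℝ) < Real.exp u := Real.exp_pos u
  have h2 : (0:ℝ) < Real.exp (-u) := Real.exp_pos (-u)
  rw [e1]
  field_simp
  nlinarith [e2, h1, h2]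

theorem stmt_17
    (h : ℝ → ℝ → ℝ)
    (hh : ∀ lam x, h lam x
        = (1 - Real.exp (-1 / lam)) * x * (1 - x) / (1 - (1 - Real.exp (-1 / lam)) * x))
    (M : ℝ → ℝ) (hM : ∀ lam, M lam = sSup (h lam '' Icc (0:ℝ) 1)) :
    (∀ lam, 0 < lam → M lam = Real.tanh (1 / (4 * lam)) ∧ M lam < 1)
    ∧ Tendsto M (nhdsWithin 0 (Ioi 0)) (nhds 1)
    ∧ Tendsto M atTop (nhds 0) := by
  -- key: for lam > 0, M lam = (1-q)/(1+q) with q = exp(-(1/(2 lam)))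
  have key : ∀ lam : ℝ, 0 < lam →
      M lam = (1 - Real.exp (-(1/(2*lam)))) / (1 + Real.exp (-(1/(2*lam)))) := by
    intro lam hlam
    set q := Real.exp (-(1/(2*lam))) with hqdef
    have hq0 : 0 < q := Real.exp_pos _
    have hq1 : q < 1 := by
      rw [hqdef, Real.exp_lt_one_iff]
      have : 0 < 1/(2*lam) := by positivity
      linarith
    have hc : Real.exp (-1/lam) = q^2 := by
      rw [hqdef, sq, ← Real.exp_add]
      congr 1
      field_simp
      ring
    have h1q : (0:ℝ) < 1 + q := by linarith
    have great : IsGreatest (h lam '' Icc (0:ℝ) 1) ((1-q)/(1+q)) := by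
      constructor
      · refine ⟨1/(1+q), ⟨by positivity, ?_⟩, ?_⟩
        · rw [div_le_one h1q]; linarith
        · rw [hh, hc]
          have hd : 1 - (1 - q^2) * (1/(1+q)) = q := by
            field_simp; ring
          rw [hd]
          field_simp
          ring
      · rintro y ⟨x, ⟨hx0, hx1⟩, rfl⟩
        rw [hh, hc]
        have hden : 0 < 1 - (1 - q^2) * x := by nlinarith [mul_le_of_le_one_right (by nlinarith : (0:ℝ) ≤ 1 - q^2) hx1]
        rw [div_le_div_iff₀ hden h1q]
        nlinarith [sq_nonneg (1 - (1+q)*x), mul_nonneg (le_of_lt (sub_pos.mpr hq1)) (sq_nonneg (1 - (1+q)*x))]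
    rw [hM]
    exact great.csSup_eq
  -- identity with tanh
  have tanh_id : ∀ lam : ℝ, 0 < lam →
      Real.tanh (1/(4*lam)) = (1 - Real.exp (-(1/(2*lam)))) / (1 + Real.exp (-(1/(2*lam)))) := by
    intro lam hlam
    rw [tanh_eq']
    congr 3 <;> · congr 1; field_simp; ring
  refine ⟨?_, ?_, ?_⟩
  · intro lam hlam
    have hq1 : Real.exp (-(1/(2*lam))) < 1 := by
      rw [Real.exp_lt_one_iff]
      have : 0 < 1/(2*lam) := by positivity
      linarith
    have hq0 : 0 < Real.exp (-(1/(2*lam))) := Real.exp_pos _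
    constructor
    · rw [key lam hlam, tanh_id lam hlam]
    · rw [key lam hlam, div_lt_one (by linarith)]
      linarith
  · -- lam → 0+
    have hq : Tendsto (fun lam : ℝ => Real.exp (-(1/(2*lam)))) (nhdsWithin 0 (Ioi 0)) (nhds 0) := by
      apply Real.tendsto_exp_atBot.comp
      apply tendsto_neg_atTop_atBot.comp
      have : Tendsto (fun lam : ℝ => (1/2) * lam⁻¹) (nhdsWithin 0 (Ioi 0)) atTop :=
        (tendsto_inv_nhdsGT_zero).const_mul_atTop (by norm_num)
      refine this.congr (fun lam => by field_simp)
    have hlim : Tendsto (fun lam : ℝ => (1 - Real.exp (-(1/(2*lam)))) / (1 + Real.exp (-(1/(2*lam)))))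
        (nhdsWithin 0 (Ioi 0)) (nhds 1) := by
      have h1 : Tendsto (fun _ : ℝ => (1:ℝ)) (nhdsWithin 0 (Ioi 0)) (nhds 1) := tendsto_const_nhds
      have := (h1.sub hq).div (h1.add hq) (show (1:ℝ) + 0 ≠ 0 by norm_num)
      simpa [Pi.div_def] using this
    refine hlim.congr' ?_
    filter_upwards [self_mem_nhdsWithin] with lam hlam
    exact (key lam hlam).symm
  · -- lam → ∞
    have hq : Tendsto (fun lam : ℝ => Real.exp (-(1/(2*lam)))) atTop (nhds 1) := by
      have h0 : Tendsto (fun lam : ℝ => -(1/(2*lam))) atTop (nhds 0) := by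
        have : Tendsto (fun lam : ℝ => 1/(2*lam)) atTop (nhds 0) :=
          Tendsto.div_atTop tendsto_const_nhds (tendsto_id.const_mul_atTop (by norm_num))
        simpa using this.neg
      have := (Real.continuous_exp.tendsto 0).comp h0
      simpa [Function.comp_def] using this
    have hlim : Tendsto (fun lam : ℝ => (1 - Real.exp (-(1/(2*lam)))) / (1 + Real.exp (-(1/(2*lam)))))
        atTop (nhds 0) := by
      have h1 : Tendsto (fun _ : ℝ => (1:ℝ)) atTop (nhds 1) := tendsto_const_nhds
      have := (h1.sub hq).div (h1.add hq) (show (1:ℝ) + 1 ≠ 0 by norm_num)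
      simpa [Pi.div_def] using this
    refine hlim.congr' ?_
    filter_upwards [eventually_gt_atTop 0] with lam hlam
    exact (key lam hlam).symm
end
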